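/- arXiv:1612.03022 — 4 statements merged into one kernel-verified Lean document; each statement's English description precedes it below -/
import Mathlib

section
/- Let X be a metric space, ℓ ≥ 0 a real number, ε > 0, and let γ : [0,1] → X be a continuous path whose total variation satisfies eVariationOn γ [0,1] ≤ ℓ. Set N = max(⌈ℓ/ε⌉, 1). Then there exist real numbers 0 = t₀ ≤ t₁ ≤ ⋯ ≤ t_N = 1 such that for every 0 ≤ i < N the set γ([tᵢ, tᵢ₊₁]) has diameter at most ε. -/
/-!
Since `γ` is continuous, its variation function `v s = var(γ, [0, s])` is continuous as well as
monotone. Cut the range `[0, v 1]` of `v` into `N` equal parts and let `tᵢ` be the largest preimage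
of the `i`-th cut point. The image of `[tᵢ, tᵢ₊₁]` has diameter at most the variation of `γ` there,
which is `v tᵢ₊₁ - v tᵢ = v 1 / N ≤ ℓ / N ≤ ε`.
-/

open Set

section Variation

variable {α E : Type*} [LinearOrder α]

theorem ediam_image_le_eVariationOn [PseudoEMetricSpace E] (f : α → E) (s : Set α) :
    Metric.ediam (f '' s) ≤ eVariationOn f s := by
  refine Metric.ediam_le ?_
  rintro _ ⟨x, hx, rfl⟩ _ ⟨y, hy, rfl⟩
  exact eVariationOn.edist_le f hx hy

theorem BoundedVariationOn.diam_image_le [PseudoMetricSpace E] {f : α → E} {s : Set α}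
    (hf : BoundedVariationOn f s) : Metric.diam (f '' s) ≤ (eVariationOn f s).toReal :=
  ENNReal.toReal_mono hf (ediam_image_le_eVariationOn f s)

theorem LocallyBoundedVariationOn.continuousOn_variationOnFromTo [TopologicalSpace α]
    [OrderTopology α] [PseudoMetricSpace E] {f : α → E} {s : Set α}
    (hf : LocallyBoundedVariationOn f s) (hc : ContinuousOn f s) {a : α} (ha : a ∈ s) :
    ContinuousOn (variationOnFromTo f s a) s := by
  intro b hb
  have hleft : ContinuousWithinAt (variationOnFromTo f s a) (s ∩ Iio b) b := by
    simpa [ContinuousWithinAt] using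
      variationOnFromTo.tendsto_left ha hb hf ((hc b hb).mono inter_subset_left)
  have hright : ContinuousWithinAt (variationOnFromTo f s a) (s ∩ Ioi b) b := by
    simpa [ContinuousWithinAt] using
      variationOnFromTo.tendsto_right ha hb hf ((hc b hb).mono inter_subset_left)
  refine (continuousWithinAt_insert_self.2 (hleft.union hright)).mono fun x hx => ?_
  rcases lt_trichotomy x b with h | rfl | h
  exacts [Or.inr (Or.inl ⟨hx, h⟩), Or.inl rfl, Or.inr (Or.inr ⟨hx, h⟩)]

end Variation

section Partition

variable {v : ℝ → ℝ} {a b : ℝ}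

theorem MonotoneOn.csSup_preimage_Iic_mem_Icc_and_apply_eq (hab : a ≤ b)
    (hmono : MonotoneOn v (Icc a b)) (hcont : ContinuousOn v (Icc a b)) {c : ℝ}
    (hac : v a ≤ c) (hcb : c ≤ v b) :
    sSup (Icc a b ∩ v ⁻¹' Iic c) ∈ Icc a b ∧ v (sSup (Icc a b ∩ v ⁻¹' Iic c)) = c := by
  set K := Icc a b ∩ v ⁻¹' Iic c
  have hbdd : BddAbove K := bddAbove_Icc.mono inter_subset_left
  have hmem : sSup K ∈ K :=
    (hcont.preimage_isClosed_of_isClosed isClosed_Icc isClosed_Iic).csSup_mem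
      ⟨a, left_mem_Icc.2 hab, hac⟩ hbdd
  obtain ⟨s, hs, hvs⟩ := intermediate_value_Icc hab hcont ⟨hac, hcb⟩
  refine ⟨hmem.1, le_antisymm hmem.2 ?_⟩
  calc c = v s := hvs.symm
    _ ≤ v (sSup K) := hmono hs hmem.1 (le_csSup hbdd ⟨hs, hvs.le⟩)

theorem MonotoneOn.exists_partition_with_equal_increments (hab : a ≤ b)
    (hmono : MonotoneOn v (Icc a b)) (hcont : ContinuousOn v (Icc a b)) {N : ℕ} (hN : N ≠ 0) :
    ∃ t : ℕ → ℝ, t 0 = a ∧ t N = b ∧ (∀ i j, i ≤ j → j ≤ N → t i ≤ t j) ∧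
      ∀ i < N, v (t (i + 1)) - v (t i) = (v b - v a) / N := by
  set c : ℕ → ℝ := fun i => v a + i * ((v b - v a) / N)
  have hvab : v a ≤ v b := hmono (left_mem_Icc.2 hab) (right_mem_Icc.2 hab) hab
  have hc_mono : Monotone c := fun i j hij => by simp only [c]; gcongr
  have hcN : c N = v b := by simp only [c]; field_simp; ring
  have hc_mem : ∀ i ≤ N, v a ≤ c i ∧ c i ≤ v b := fun i hi =>
    ⟨by simpa [c] using hc_mono (Nat.zero_le i), hcN ▸ hc_mono hi⟩
  -- Largest preimages keep `t` monotone where `v` is constant; the largest preimage of `v a`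
  -- may lie to the right of `a`, hence the separate value at `0`.
  set t : ℕ → ℝ := fun i => if i = 0 then a else sSup (Icc a b ∩ v ⁻¹' Iic (c i))
  have ht : ∀ i ≤ N, t i ∈ Icc a b ∧ v (t i) = c i := by
    intro i hi
    rcases eq_or_ne i 0 with rfl | hi0
    · simp [t, c, hab]
    · simpa [t, hi0] using
        csSup_preimage_Iic_mem_Icc_and_apply_eq hab hmono hcont (hc_mem i hi).1 (hc_mem i hi).2
  have hbdd : ∀ i, BddAbove (Icc a b ∩ v ⁻¹' Iic (c i)) := fun i =>
    bddAbove_Icc.mono inter_subset_left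
  refine ⟨t, if_pos rfl, ?_, fun i j hij hjN => ?_, fun i hi => ?_⟩
  · refine le_antisymm (ht N le_rfl).1.2 ?_
    simpa [t, hN] using le_csSup (hbdd N) ⟨right_mem_Icc.2 hab, hcN.ge⟩
  · rcases eq_or_ne i 0 with rfl | hi0
    · exact (ht j hjN).1.1
    · have hj0 : j ≠ 0 := by omega
      simp only [t, hi0, hj0, if_false]
      exact csSup_le_csSup (hbdd j) ⟨a, left_mem_Icc.2 hab, (hc_mem i (hij.trans hjN)).1⟩
        (inter_subset_inter_right _ (preimage_mono (Iic_subset_Iic.2 (hc_mono hij))))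
  · rw [(ht _ hi).2, (ht i hi.le).2]
    simp only [c]; push_cast; ring

end Partition

/-- A continuous path of length at most `ℓ` in a metric space can be subdivided into
`N = max ⌈ℓ/ε⌉ 1` subsegments each of whose images has diameter at most `ε`
(the metric content of Proposition 2.3 of Hurder–Walczak). -/
theorem stmt3 {X : Type*} [MetricSpace X] (ℓ ε : ℝ) (hℓ : 0 ≤ ℓ) (hε : 0 < ε)
    (γ : ℝ → X) (hγ : ContinuousOn γ (Set.Icc 0 1))
    (hvar : eVariationOn γ (Set.Icc 0 1) ≤ ENNReal.ofReal ℓ) :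
    ∃ t : ℕ → ℝ, t 0 = 0 ∧ t (max ⌈ℓ / ε⌉₊ 1) = 1 ∧
      (∀ i j : ℕ, i ≤ j → j ≤ max ⌈ℓ / ε⌉₊ 1 → t i ≤ t j) ∧
      (∀ i : ℕ, i < max ⌈ℓ / ε⌉₊ 1 →
        Metric.diam (γ '' Set.Icc (t i) (t (i + 1))) ≤ ε) := by
  set N := max ⌈ℓ / ε⌉₊ 1
  have hN : 0 < N := lt_max_of_lt_right one_pos
  have hℓN : ℓ / N ≤ ε := by
    rw [div_le_iff₀ (by exact_mod_cast hN), ← div_le_iff₀' hε]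
    exact (Nat.le_ceil _).trans (by exact_mod_cast le_max_left _ _)
  have hbv : BoundedVariationOn γ (Icc 0 1) := ne_top_of_le_ne_top ENNReal.ofReal_ne_top hvar
  have hlbv := hbv.locallyBoundedVariationOn
  have h0 : (0 : ℝ) ∈ Icc 0 1 := left_mem_Icc.2 zero_le_one
  set v := variationOnFromTo γ (Icc 0 1) 0
  obtain ⟨t, ht0, htN, ht_mono, htv⟩ :=
    (variationOnFromTo.monotoneOn hlbv h0).exists_partition_with_equal_increments zero_le_one
      (hlbv.continuousOn_variationOnFromTo hγ h0) hN.ne'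
  have hv : v 1 - v 0 ≤ ℓ := by
    simpa [v, variationOnFromTo.eq_of_le] using ENNReal.toReal_le_of_le_ofReal hℓ hvar
  refine ⟨t, ht0, htN, ht_mono, fun i hi => ?_⟩
  have hle : t i ≤ t (i + 1) := ht_mono i (i + 1) i.le_succ hi
  have hsub : Icc (t i) (t (i + 1)) ⊆ Icc 0 1 :=
    Icc_subset_Icc (ht0 ▸ ht_mono 0 i i.zero_le hi.le) (htN ▸ ht_mono (i + 1) N hi le_rfl)
  calc Metric.diam (γ '' Icc (t i) (t (i + 1)))
      ≤ (eVariationOn γ (Icc 0 1 ∩ Icc (t i) (t (i + 1)))).toReal := by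
        rw [inter_eq_right.2 hsub]; exact (hbv.mono hsub).diam_image_le
    _ = v (t (i + 1)) - v (t i) := by
        rw [← variationOnFromTo.eq_of_le _ _ hle, ← variationOnFromTo.sub_right hlbv h0
          (hsub (right_mem_Icc.2 hle)) (hsub (left_mem_Icc.2 hle))]
    _ = (v 1 - v 0) / N := htv i hi
    _ ≤ ℓ / N := by gcongr
    _ ≤ ε := hℓN
end

section
/- Let M be a compact metric space equipped with a continuous action of the circle group Circle such that the orbit length ℓ(x) is finite for every x ∈ M. Let B be the set of points x ∈ M such that ℓ is not bounded above on any neighborhood of x. Then B is closed, B is a union of orbits, and B has empty interior. -/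
/-!
The orbit length is a supremum of finite sums of distances between points of the orbit, each
continuous in the base point, so it is lower semicontinuous; and it is invariant under the action,
because the orbit loop of `g • x` is that of `x` reparametrised by a rotation. For a lower
semicontinuous function `f` the sublevel sets `{f ≤ n}` are closed and, `f` being finite, cover
the space, so by Baire's theorem the union of their interiors is dense. A point of that union has a
neighbourhood on which `f` is bounded, hence the locus where `f` is locally unbounded has empty
interior; it is closed by definition, and mapped into itself by every continuous self-map
preserving `f`.
-/

open scoped Real ENNReal
open Set Topology Function

section UnboundedLocus

variable {X : Type*} [TopologicalSpace X]

def unboundedLocus (f : X → ℝ≥0∞) : Set X :=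
  {x | ∀ U : Set X, IsOpen U → x ∈ U → sSup (f '' U) = ⊤}

theorem isClosed_unboundedLocus (f : X → ℝ≥0∞) : IsClosed (unboundedLocus f) := by
  refine isOpen_compl_iff.mp <| isOpen_iff_forall_mem_open.mpr fun x hx => ?_
  simp only [unboundedLocus, mem_compl_iff, mem_ofPred_eq, not_forall] at hx
  obtain ⟨U, hU, hxU, hsup⟩ := hx
  exact ⟨U, fun y hy hyB => hsup (hyB U hU hy), hU, hxU⟩

theorem mem_unboundedLocus_of_comp_eq {f : X → ℝ≥0∞} {h : X → X} (hh : Continuous h)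
    (hf : ∀ x, f (h x) = f x) {x : X} (hx : x ∈ unboundedLocus f) :
    h x ∈ unboundedLocus f := by
  intro U hU hxU
  have hsub : f '' (h ⁻¹' U) ⊆ f '' U := by
    rintro _ ⟨y, hy, rfl⟩
    exact ⟨h y, hy, hf y⟩
  exact top_le_iff.mp (hx _ (hU.preimage hh) hxU ▸ sSup_le_sSup hsub)

theorem interior_unboundedLocus_eq_empty [BaireSpace X] {f : X → ℝ≥0∞}
    (hf : LowerSemicontinuous f) (hfin : ∀ x, f x ≠ ⊤) :
    interior (unboundedLocus f) = ∅ := by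
  have hcover : ⋃ n : ℕ, f ⁻¹' Iic (n : ℝ≥0∞) = univ :=
    eq_univ_of_forall fun x =>
      mem_iUnion.mpr ((ENNReal.exists_nat_gt (hfin x)).imp fun _ hn => hn.le)
  have hdense := dense_iUnion_interior_of_closed (fun n : ℕ => hf.isClosed_preimage n) hcover
  by_contra hne
  obtain ⟨y, hyB, hy⟩ :=
    hdense.inter_open_nonempty _ isOpen_interior (nonempty_iff_ne_empty.mpr hne)
  obtain ⟨n, hyn⟩ := mem_iUnion.mp hy
  have hbound : sSup (f '' interior (f ⁻¹' Iic (n : ℝ≥0∞))) ≤ n :=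
    sSup_le <| forall_mem_image.mpr fun z hz =>
      (interior_subset hz : z ∈ f ⁻¹' Iic (n : ℝ≥0∞))
  rw [interior_subset hyB _ isOpen_interior hyn, top_le_iff] at hbound
  exact ENNReal.natCast_ne_top n hbound

end UnboundedLocus

section Variation

variable {E : Type*} [PseudoEMetricSpace E]

theorem eVariationOn_comp_add_right (f : ℝ → E) (a b c : ℝ) :
    eVariationOn (fun t => f (t + c)) (Icc a b) = eVariationOn f (Icc (a + c) (b + c)) := by
  rw [← image_add_const_Icc, ← eVariationOn.comp_eq_of_monotoneOn f (· + c)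
    ((monotone_id.add_const c).monotoneOn _)]
  rfl

theorem eVariationOn_Icc_add_Icc (f : ℝ → E) {a b c : ℝ} (hab : a ≤ b) (hbc : b ≤ c) :
    eVariationOn f (Icc a b) + eVariationOn f (Icc b c) = eVariationOn f (Icc a c) := by
  simpa using eVariationOn.Icc_add_Icc f (s := univ) hab hbc (mem_univ b)

theorem Function.Periodic.eVariationOn_Icc_add {f : ℝ → E} {T : ℝ} (hf : Periodic f T)
    (hT : 0 < T) (s : ℝ) :
    eVariationOn f (Icc s (s + T)) = eVariationOn f (Icc 0 T) := by
  set r := toIcoMod hT 0 s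
  obtain ⟨hr0, hrT⟩ : r ∈ Ico 0 T := by simpa using toIcoMod_mem_Ico hT 0 s
  have hs : s = r + toIcoDiv hT 0 s • T := (toIcoMod_add_toIcoDiv_zsmul hT 0 s).symm
  have hshift : ∀ (k : ℤ) (a b : ℝ),
      eVariationOn f (Icc (a + k • T) (b + k • T)) = eVariationOn f (Icc a b) := by
    intro k a b
    rw [← eVariationOn_comp_add_right]
    exact congrArg (eVariationOn · _) (funext (hf.zsmul k))
  have htail : eVariationOn f (Icc T (r + T)) = eVariationOn f (Icc 0 r) := by
    simpa [add_comm r] using hshift 1 0 r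
  calc eVariationOn f (Icc s (s + T))
      = eVariationOn f (Icc r (r + T)) := by
        rw [hs, add_right_comm, hshift]
    _ = eVariationOn f (Icc 0 r) + eVariationOn f (Icc r T) := by
        rw [← eVariationOn_Icc_add_Icc f hrT.le (by linarith), htail, add_comm]
    _ = eVariationOn f (Icc 0 T) := eVariationOn_Icc_add_Icc f hr0 hrT.le

theorem lowerSemicontinuous_eVariationOn {X α : Type*} [TopologicalSpace X] [LinearOrder α]
    {F : X → α → E} {s : Set α} (hF : ∀ t ∈ s, Continuous fun x => F x t) :
    LowerSemicontinuous fun x => eVariationOn (F x) s :=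
  fun x _ hv => eVariationOn.lowerSemicontinuous_aux (fun t ht => (hF t ht).tendsto x) hv

end Variation

section CircleAction

variable {M : Type*} [PseudoEMetricSpace M] [MulAction Circle M]

noncomputable def circleOrbitLength (x : M) : ℝ≥0∞ :=
  eVariationOn (fun t : ℝ => Circle.exp t • x) (Icc 0 (2 * π))

theorem circleOrbitLength_smul (g : Circle) (x : M) :
    circleOrbitLength (g • x) = circleOrbitLength x := by
  obtain ⟨s, rfl⟩ : ∃ s : ℝ, Circle.exp s = g := ⟨_, Circle.exp_arg g⟩
  have hloop : (fun t : ℝ => Circle.exp t • Circle.exp s • x)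
      = fun t => (fun u : ℝ => Circle.exp u • x) (t + s) := by
    simp only [smul_smul, Circle.exp_add]
  have hper : Periodic (fun u : ℝ => Circle.exp u • x) (2 * π) := fun u => by
    simp only [Circle.periodic_exp u]
  rw [circleOrbitLength, hloop, eVariationOn_comp_add_right (fun u : ℝ => Circle.exp u • x),
    zero_add, add_comm (2 * π), hper.eVariationOn_Icc_add Real.two_pi_pos, circleOrbitLength]

theorem lowerSemicontinuous_circleOrbitLength [ContinuousConstSMul Circle M] :
    LowerSemicontinuous (circleOrbitLength : M → ℝ≥0∞) :=
  lowerSemicontinuous_eVariationOn fun t _ => continuous_const_smul (Circle.exp t)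

end CircleAction

/-- For a continuous circle action on a compact metric space with all orbits of finite
length, the bad set — the set of points near which the orbit length function is not
locally bounded — is closed, saturated (a union of orbits), and has empty interior
(the circle-action instance of §3.1 of Hurder–Walczak). -/
theorem stmt6 {M : Type*} [MetricSpace M] [CompactSpace M]
    [MulAction Circle M] [ContinuousSMul Circle M]
    (ℓ : M → ENNReal)
    (hℓ : ∀ x : M,
      ℓ x = eVariationOn (fun t : ℝ => Circle.exp t • x) (Set.Icc 0 (2 * π)))
    (hfin : ∀ x : M, ℓ x ≠ ⊤)
    (B : Set M)
    (hB : B = {x : M | ∀ U : Set M, IsOpen U → x ∈ U → sSup (ℓ '' U) = ⊤}) :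
    IsClosed B ∧ (∀ x ∈ B, ∀ g : Circle, g • x ∈ B) ∧ interior B = ∅ := by
  obtain rfl : ℓ = circleOrbitLength := funext hℓ
  obtain rfl : B = unboundedLocus circleOrbitLength := hB
  exact ⟨isClosed_unboundedLocus _,
    fun x hx g => mem_unboundedLocus_of_comp_eq (continuous_const_smul g)
      (circleOrbitLength_smul g) hx,
    interior_unboundedLocus_eq_empty lowerSemicontinuous_circleOrbitLength hfin⟩
end

section
/- Let M be a closed (compact, boundaryless) smooth manifold whose topology is induced by a metric d, and let φ : ℝ × M → M be a smooth flow such that every point of M is periodic and no point is fixed. Then for every x' ∈ M, every ε > 0 and every Λ > 0 there exists δ > 0 with the following property: if x ∈ M admits a period T > 0 (φ(T,x) = x) with eVariationOn (t ↦ φ(t,x)) [0,T] < Λ, and if some point of the orbit of x lies at distance less than δ from the orbit of x', then every point of the orbit of x lies at distance less than ε from the orbit of x'. -/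
open scoped Manifold ENNReal
open Set

/-!
Compactness and the absence of fixed points give a time `τ` within which every point moves by at
least `a`, so along an orbit every time window of length `τ` adds `a` to the length, and an orbit
of length `< Λ` has period `< N τ` as soon as `N a > Λ`. The maps `φ (t, ·)`, `t ∈ [0, N τ]`, are
equicontinuous: if `φ (s, x)` is `δ`-close to `φ (s', x')`, then `φ (s + v, x)` stays `ε`-close to
`φ (s' + v, x')` for `v ∈ [0, N τ]`, and these times already cover a full period of `x`.
-/

theorem nat_mul_le_eVariationOn_Icc {E : Type*} [PseudoEMetricSpace E] {f : ℝ → E} {τ : ℝ}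
    {a : ℝ≥0∞} (hf : ∀ s, ∃ t ∈ Icc 0 τ, a ≤ edist (f (s + t)) (f s)) (N : ℕ) :
    N * a ≤ eVariationOn f (Icc 0 (N * τ)) := by
  have hτ : 0 ≤ τ := by
    obtain ⟨t, ht, -⟩ := hf 0
    exact ht.1.trans ht.2
  induction N with
  | zero => simp
  | succ N ih =>
    obtain ⟨t, ht, hat⟩ := hf (N * τ)
    have hNτ : (N : ℝ) * τ ≤ (N + 1 : ℕ) * τ := by push_cast; linarith
    have hstep : edist (f (N * τ + t)) (f (N * τ)) ≤
        eVariationOn f (univ ∩ Icc (N * τ) ((N + 1 : ℕ) * τ)) :=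
      eVariationOn.edist_le f ⟨trivial, by linarith [ht.1], by push_cast; linarith [ht.2]⟩
        ⟨trivial, le_rfl, hNτ⟩
    calc ((N + 1 : ℕ) : ℝ≥0∞) * a = N * a + a := by push_cast; ring
      _ ≤ eVariationOn f (univ ∩ Icc 0 (N * τ)) +
          eVariationOn f (univ ∩ Icc (N * τ) ((N + 1 : ℕ) * τ)) := by
        rw [univ_inter]; gcongr; exact hat.trans hstep
      _ = eVariationOn f (Icc 0 ((N + 1 : ℕ) * τ)) := by
        simpa only [univ_inter] using
          eVariationOn.Icc_add_Icc f (s := univ) (by positivity) hNτ (mem_univ _)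

theorem lt_nat_mul_of_eVariationOn_Icc_lt {E : Type*} [PseudoEMetricSpace E] {f : ℝ → E}
    {τ : ℝ} {a : ℝ≥0∞} (hf : ∀ s, ∃ t ∈ Icc 0 τ, a ≤ edist (f (s + t)) (f s)) {T : ℝ} {N : ℕ}
    (hT : eVariationOn f (Icc 0 T) < N * a) : T < N * τ := by
  by_contra! h
  exact (nat_mul_le_eVariationOn_Icc hf N |>.trans (eVariationOn.mono f
    (Icc_subset_Icc_right h))).not_gt hT

theorem IsCompact.exists_pos_forall_dist_apply_lt {P X Y : Type*} [PseudoMetricSpace P]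
    [PseudoMetricSpace X] [CompactSpace X] [PseudoMetricSpace Y] {f : P × X → Y}
    (hf : Continuous f) {K : Set P} (hK : IsCompact K) {ε : ℝ} (hε : 0 < ε) :
    ∃ δ > 0, ∀ t ∈ K, ∀ y z, dist y z < δ → dist (f (t, y)) (f (t, z)) < ε := by
  obtain ⟨δ, hδ, h⟩ := Metric.uniformContinuousOn_iff.1
    ((hK.prod isCompact_univ).uniformContinuousOn_of_continuous hf.continuousOn) ε hε
  refine ⟨δ, hδ, fun t ht y z hyz => h (t, y) ⟨ht, trivial⟩ (t, z) ⟨ht, trivial⟩ ?_⟩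
  simpa only [Prod.dist_eq, dist_self, max_eq_right dist_nonneg] using hyz

section Flow

variable {X : Type*} (φ : ℝ × X → X)

theorem periodic_flow_of_apply_eq (hadd : ∀ s t : ℝ, ∀ x : X, φ (s + t, x) = φ (s, φ (t, x)))
    {x : X} {T : ℝ} (hT : φ (T, x) = x) : Function.Periodic (fun t => φ (t, x)) T := by
  intro t
  simp only [hadd, hT]

theorem exists_pos_flow_ne (hzero : ∀ x : X, φ (0, x) = x)
    (hadd : ∀ s t : ℝ, ∀ x : X, φ (s + t, x) = φ (s, φ (t, x)))
    (hnonfix : ∀ x : X, ∃ t : ℝ, φ (t, x) ≠ x) (x : X) : ∃ t > 0, φ (t, x) ≠ x := by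
  obtain ⟨t, ht⟩ := hnonfix x
  rcases lt_trichotomy t 0 with hneg | rfl | hpos
  · refine ⟨-t, neg_pos.2 hneg, fun hfix => ht ?_⟩
    rw [← hfix, ← hadd, add_neg_cancel, hzero, hfix]
  · exact absurd (hzero x) ht
  · exact ⟨t, hpos, ht⟩

theorem exists_uniform_flow_escape [EMetricSpace X] [CompactSpace X] (hφ : Continuous φ)
    (hpos : ∀ x : X, ∃ t > 0, φ (t, x) ≠ x) :
    ∃ τ : ℝ, ∃ a : ℝ≥0∞, a ≠ 0 ∧ ∀ x, ∃ t ∈ Icc 0 τ, a ≤ edist (φ (t, x)) x := by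
  let U : ℕ → Set X := fun k => ⋃ t ∈ Icc (0 : ℝ) k, {x | (k : ℝ≥0∞)⁻¹ < edist (φ (t, x)) x}
  have hUo : ∀ k, IsOpen (U k) := fun k =>
    isOpen_biUnion fun t _ => isOpen_lt continuous_const (by fun_prop)
  have hUmono : Monotone U := by
    intro k l hkl x hx
    simp only [U, mem_iUnion₂, mem_ofPred_eq] at hx ⊢
    obtain ⟨t, ht, hxt⟩ := hx
    exact ⟨t, ⟨ht.1, ht.2.trans (by exact_mod_cast hkl)⟩,
      lt_of_le_of_lt (ENNReal.inv_le_inv.2 (by exact_mod_cast hkl)) hxt⟩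
  have hcover : univ ⊆ ⋃ k, U k := by
    intro x _
    obtain ⟨t, ht, hne⟩ := hpos x
    obtain ⟨n, hn⟩ := ENNReal.exists_inv_nat_lt (edist_pos.2 hne).ne'
    refine mem_iUnion.2 ⟨max n ⌈t⌉₊, mem_iUnion₂.2 ⟨t, ⟨ht.le, ?_⟩, ?_⟩⟩
    · exact (Nat.le_ceil t).trans (by exact_mod_cast le_max_right n ⌈t⌉₊)
    · exact lt_of_le_of_lt (ENNReal.inv_le_inv.2 (by exact_mod_cast le_max_left n ⌈t⌉₊)) hn
  obtain ⟨k, hk⟩ := isCompact_univ.elim_directed_cover U hUo hcover hUmono.directed_le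
  refine ⟨k, (k : ℝ≥0∞)⁻¹, ENNReal.inv_ne_zero.2 (ENNReal.natCast_ne_top k), fun x => ?_⟩
  obtain ⟨t, ht, hxt⟩ := mem_iUnion₂.1 (hk (mem_univ x))
  exact ⟨t, ht, hxt.le⟩

end Flow

theorem stmt8_general {n : ℕ} {M : Type*} [MetricSpace M]
    [ChartedSpace (EuclideanSpace ℝ (Fin n)) M]
    [IsManifold (𝓡 n) (⊤ : ℕ∞) M] [CompactSpace M]
    (φ : ℝ × M → M)
    (hφ : ContMDiff ((𝓘(ℝ, ℝ)).prod (𝓡 n)) (𝓡 n) (⊤ : ℕ∞) φ)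
    (hzero : ∀ x : M, φ (0, x) = x)
    (hadd : ∀ s t : ℝ, ∀ x : M, φ (s + t, x) = φ (s, φ (t, x)))
    (hnonfix : ∀ x : M, ∃ t : ℝ, φ (t, x) ≠ x)
    (x' : M) (ε Λ : ℝ) (hε : 0 < ε) :
    ∃ δ > (0:ℝ), ∀ x : M, ∀ T > (0:ℝ), φ (T, x) = x →
      eVariationOn (fun t : ℝ => φ (t, x)) (Set.Icc 0 T) < ENNReal.ofReal Λ →
      (∃ s s' : ℝ, dist (φ (s, x)) (φ (s', x')) < δ) →
      ∀ s : ℝ, ∃ s' : ℝ, dist (φ (s, x)) (φ (s', x')) < ε := by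
  have hφc : Continuous φ := hφ.continuous
  obtain ⟨τ, a, ha, hesc⟩ :=
    exists_uniform_flow_escape φ hφc (exists_pos_flow_ne φ hzero hadd hnonfix)
  obtain ⟨N, hN⟩ := ENNReal.exists_nat_mul_gt ha (ENNReal.ofReal_ne_top (r := Λ))
  obtain ⟨δ, hδ, hequi⟩ :=
    (isCompact_Icc (a := 0) (b := N * τ)).exists_pos_forall_dist_apply_lt hφc hε
  refine ⟨δ, hδ, fun x T hT hTx hvar ⟨s, s', hss'⟩ b => ?_⟩
  have horbit_esc : ∀ r, ∃ t ∈ Icc 0 τ, a ≤ edist (φ (r + t, x)) (φ (r, x)) := fun r => by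
    simpa only [add_comm r, hadd] using hesc (φ (r, x))
  have hTN : T < N * τ := lt_nat_mul_of_eVariationOn_Icc_lt horbit_esc (hvar.trans hN)
  obtain ⟨v, hv, hbv⟩ := (periodic_flow_of_apply_eq φ hadd hTx).exists_mem_Ico hT b s
  refine ⟨v - s + s', ?_⟩
  calc dist (φ (b, x)) (φ (v - s + s', x'))
      = dist (φ (v - s, φ (s, x))) (φ (v - s, φ (s', x'))) := by
        rw [hbv, ← hadd, ← hadd, sub_add_cancel]
    _ < ε := hequi (v - s) ⟨by linarith [hv.1], by linarith [hv.2]⟩ _ _ hss'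

/-- Captured orbits: for a smooth everywhere-periodic nonsingular flow on a closed
smooth manifold, for each orbit-length bound `Λ` there is `δ > 0` such that every
periodic orbit of length less than `Λ` meeting the `δ`-neighborhood of the orbit of
`x'` lies entirely within distance `ε` of that orbit (the flow instance of
Proposition 2.6 of Hurder–Walczak). -/
theorem stmt8 {n : ℕ} {M : Type*} [MetricSpace M]
    [ChartedSpace (EuclideanSpace ℝ (Fin n)) M]
    [IsManifold (𝓡 n) (⊤ : ℕ∞) M] [CompactSpace M]
    (φ : ℝ × M → M)
    (hφ : ContMDiff ((𝓘(ℝ, ℝ)).prod (𝓡 n)) (𝓡 n) (⊤ : ℕ∞) φ)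
    (hzero : ∀ x : M, φ (0, x) = x)
    (hadd : ∀ s t : ℝ, ∀ x : M, φ (s + t, x) = φ (s, φ (t, x)))
    (hper : ∀ x : M, ∃ T > (0:ℝ), φ (T, x) = x)
    (hnonfix : ∀ x : M, ∃ t : ℝ, φ (t, x) ≠ x)
    (x' : M) (ε Λ : ℝ) (hε : 0 < ε) (hΛ : 0 < Λ) :
    ∃ δ > (0:ℝ), ∀ x : M, ∀ T > (0:ℝ), φ (T, x) = x →
      eVariationOn (fun t : ℝ => φ (t, x)) (Set.Icc 0 T) < ENNReal.ofReal Λ →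
      (∃ s s' : ℝ, dist (φ (s, x)) (φ (s', x')) < δ) →
      ∀ s : ℝ, ∃ s' : ℝ, dist (φ (s, x)) (φ (s', x')) < ε :=
  stmt8_general φ hφ hzero hadd hnonfix x' ε Λ hε
end

section
/- Let M be a closed (compact, boundaryless) smooth manifold and let φ : ℝ × M → M be a smooth flow such that every point of M is periodic and no point is fixed. Let x₀ ∈ M, let L = {φ(t,x₀) : t ∈ ℝ} be its orbit, and let H : L × [0,1] → M be a continuous homotopy with H(·,0) the inclusion of L into M, such that for every t ∈ [0,1] the image H(L × {t}) is contained in a single orbit O_t. Then H(L × {t}) = O_t for every t ∈ [0,1]; that is, each map H(·,t) sends L onto an entire orbit. -/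
open Set Filter Topology Function
open scoped Manifold

/-!
The inverse function theorem, applied in a chart to `(σ, w) ↦ ϕ σ (section w)`, gives every
non-fixed point a flow box: a neighbourhood with a continuous time coordinate that the flow
translates. By compactness there is an `ε > 0` such that no point has a nonzero period in
`(-ε, ε)`, so the periods of each point form a discrete group `ℤ T`.

Let `T₀ > 0` be a period of `x₀`. The loop `s ↦ H (ϕ s x₀) t`, `s ∈ [0, T₀]`, stays in one orbit,
so it lifts to the time axis of that orbit, one flow box at a time (an orbit crosses a flow box in
finitely many plaques); the time increment `W t` of the lift is a period. Near any `t₀` one chain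
of flow boxes serves all `t`, so `W` is continuous there, and since its values avoid
`(-ε, 0) ∪ (0, ε)`, whether `W t ≠ 0` is locally constant in `t`. At `t = 0` the lift is the
identity and `W = T₀ ≠ 0`. Hence `W t` is a nonzero multiple of the minimal period for every `t`,
and by the intermediate value theorem the loop covers the whole orbit.
-/

theorem TotallyBounded.finite_image_of_dist_lt {X β : Type*} [PseudoMetricSpace X]
    {S : Set X} (hS : TotallyBounded S) {r : ℝ} (hr : 0 < r) {f : X → β}
    (hf : ∀ a ∈ S, ∀ b ∈ S, dist a b < r → f a = f b) : (f '' S).Finite := by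
  obtain ⟨c, hc, hcover⟩ := Metric.totallyBounded_iff.mp hS (r / 2) (half_pos hr)
  refine (hc.biUnion fun x _ =>
    (?_ : (f '' (S ∩ Metric.ball x (r / 2))).Subsingleton).finite).subset ?_
  · rintro _ ⟨a, ⟨ha, hax⟩, rfl⟩ _ ⟨b, ⟨hb, hbx⟩, rfl⟩
    refine hf a ha b hb ((dist_triangle_right a b x).trans_lt ?_)
    linarith [Metric.mem_ball.mp hax, Metric.mem_ball.mp hbx]
  · rintro _ ⟨a, ha, rfl⟩
    obtain ⟨x, hx, hax⟩ := mem_iUnion₂.mp (hcover ha)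
    exact mem_biUnion hx ⟨a, ⟨ha, hax⟩, rfl⟩

theorem exists_partition_mapsTo {ι X : Type*} [TopologicalSpace X] {Γ : ℝ × ℝ → X}
    (hΓ : Continuous Γ) {U : ι → Set X} (hU : ∀ i, IsOpen (U i)) (hcov : ∀ x, ∃ i, x ∈ U i)
    {T : ℝ} (hT : 0 ≤ T) (t₀ : ℝ) :
    ∃ m : ℕ, 0 < m ∧ ∃ c : ℕ → ι, ∀ᶠ t in 𝓝 t₀, ∀ k < m,
      MapsTo (fun s => Γ (s, t)) (Icc (k * T / m) ((k + 1 : ℕ) * T / m)) (U (c k)) := by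
  have : Nonempty ι := ⟨(hcov (Γ (0, t₀))).choose⟩
  obtain ⟨δ, hδ, hleb⟩ := lebesgue_number_lemma_of_metric (isCompact_Icc.prod isCompact_singleton)
    (fun i => (hU i).preimage hΓ) (fun x _ => mem_iUnion.mpr (hcov (Γ x)))
      (s := Icc 0 T ×ˢ {t₀})
  obtain ⟨m, hm⟩ := exists_nat_gt (T / δ)
  have hm0 : (0 : ℝ) < m := (div_nonneg hT hδ.le).trans_lt hm
  have hstep : T / m < δ := by
    rw [div_lt_iff₀ hm0]
    rw [div_lt_iff₀ hδ] at hm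
    linarith
  choose! c hc using fun k (hk : k < m) => hleb ((k * T / m : ℝ), t₀)
    ⟨⟨by positivity, (div_le_iff₀ hm0).mpr (by rw [mul_comm T]; gcongr)⟩,
      rfl⟩
  refine ⟨m, by exact_mod_cast hm0, c, ?_⟩
  filter_upwards [Metric.ball_mem_nhds t₀ hδ] with t ht k hk s hs
  apply hc k hk
  rw [Metric.mem_ball, Prod.dist_eq, max_lt_iff, Real.dist_eq, abs_of_nonneg (by linarith [hs.1])]
  refine ⟨?_, ht⟩
  have : (k + 1 : ℕ) * T / m - k * T / m = T / m := by push_cast; ring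
  linarith [hs.2]

theorem eventually_eq_zero_iff_of_isolated {X : Type*} [TopologicalSpace X] {f : X → ℝ}
    {x₀ : X} (hf : ContinuousAt f x₀) {ε : ℝ} (hε : 0 < ε)
    (hiso : ∀ᶠ x in 𝓝 x₀, |f x| < ε → f x = 0) : ∀ᶠ x in 𝓝 x₀, (f x = 0 ↔ f x₀ = 0) := by
  by_cases h0 : f x₀ = 0
  · have hsmall : ∀ᶠ x in 𝓝 x₀, |f x| < ε :=
      (continuous_abs.continuousAt.comp hf).eventually_lt continuousAt_const (by simpa [h0])
    filter_upwards [hsmall, hiso] with x h1 h2 using iff_of_true (h2 h1) h0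
  · filter_upwards [hf.eventually_ne h0] with x hx using iff_of_false hx h0


namespace Flow

section Periods

variable {τ α : Type*} [TopologicalSpace τ] [AddCommGroup τ] [TopologicalSpace α]
  (ϕ : Flow τ α)

def periods (x : α) : AddSubgroup τ where
  carrier := {t | ϕ t x = x}
  add_mem' {a b} (ha : ϕ a x = x) (hb : ϕ b x = x) := by
    change ϕ (a + b) x = x
    rw [map_add, hb, ha]
  zero_mem' := ϕ.map_zero_apply x
  neg_mem' {a} (ha : ϕ a x = x) := by
    change ϕ (-a) x = x
    conv_lhs => rw [← ha, ← map_add, neg_add_cancel, map_zero_apply]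

variable {ϕ}

theorem mem_periods {x : α} {t : τ} : t ∈ ϕ.periods x ↔ ϕ t x = x := Iff.rfl

theorem sub_mem_periods_iff {x : α} {t u : τ} : t - u ∈ ϕ.periods x ↔ ϕ t x = ϕ u x := by
  rw [mem_periods]
  constructor
  · intro h
    rw [show t = u + (t - u) by abel, map_add, h]
  · intro h
    rw [sub_eq_neg_add, map_add, h, ← map_add, neg_add_cancel, map_zero_apply]

theorem orbit_eq_of_mem_orbit {x y : α} (h : y ∈ ϕ.orbit x) : ϕ.orbit y = ϕ.orbit x :=
  ϕ.toAddAction.orbit_eq_iff.mpr h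

theorem periods_eq_top_of_mem_nhds [IsTopologicalAddGroup τ] [ConnectedSpace τ] {x : α}
    (h : (ϕ.periods x : Set τ) ∈ 𝓝 0) : ϕ.periods x = ⊤ := by
  have hopen := (ϕ.periods x).isOpen_of_mem_nhds h
  exact SetLike.coe_injective <|
    (IsClopen.eq_univ ⟨(ϕ.periods x).isClosed_of_isOpen hopen, hopen⟩ ⟨0, zero_mem _⟩)

end Periods

variable {M : Type*} [TopologicalSpace M]

/-- A flow box, recorded through its time coordinate alone: the transverse coordinate of `a` is
the point `ϕ (-time a) a` where the flow line through `a` crosses the section `time = 0`. -/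
structure FlowBox (ϕ : Flow ℝ M) where
  carrier : Set M
  radius : ℝ
  time : M → ℝ
  isOpen_carrier : IsOpen carrier
  radius_pos : 0 < radius
  continuousOn_time : ContinuousOn time carrier
  time_apply : ∀ a ∈ carrier, ∀ h, |h| ≤ radius → time (ϕ h a) = time a + h

namespace FlowBox

variable {ϕ : Flow ℝ M} (B : FlowBox ϕ)

def transversal (a : M) : M := ϕ (-B.time a) a

theorem transversal_apply {a : M} (ha : a ∈ B.carrier) {h : ℝ} (hh : |h| ≤ B.radius) :
    B.transversal (ϕ h a) = B.transversal a := by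
  rw [transversal, transversal, B.time_apply a ha h hh, ← map_add]
  congr 1
  ring

theorem apply_time_sub_of_transversal_eq {a b : M} (h : B.transversal a = B.transversal b) :
    ϕ (B.time b - B.time a) a = b := by
  rw [sub_eq_add_neg, map_add, ← transversal, h, transversal, ← map_add, add_neg_cancel,
    map_zero_apply]

theorem continuousOn_transversal : ContinuousOn B.transversal B.carrier :=
  ϕ.cont'.comp_continuousOn (B.continuousOn_time.neg.prodMk continuousOn_id)

theorem eq_zero_of_mem_periods {a : M} (ha : a ∈ B.carrier) {h : ℝ} (hh : |h| ≤ B.radius)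
    (hper : h ∈ ϕ.periods a) : h = 0 := by
  have := B.time_apply a ha h hh
  rw [mem_periods.mp hper] at this
  linarith

theorem finite_transversal_image_orbit {y : M} {T : ℝ} (hT : 0 < T) (hTy : T ∈ ϕ.periods y) :
    (B.transversal '' (ϕ.orbit y ∩ B.carrier)).Finite := by
  set S := Ico 0 T ∩ {c | ϕ c y ∈ B.carrier}
  have hS : TotallyBounded S :=
    (totallyBounded_Icc 0 T).subset (inter_subset_left.trans Ico_subset_Icc_self)
  refine (hS.finite_image_of_dist_lt B.radius_pos (f := fun c => B.transversal (ϕ c y))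
    fun a ha b hb hab => ?_).subset ?_
  · wlog hle : a ≤ b generalizing a b
    · exact (this b hb a ha (dist_comm a b ▸ hab) (le_of_not_ge hle)).symm
    rw [Real.dist_eq, abs_sub_comm] at hab
    rw [show b = (b - a) + a by ring, map_add, B.transversal_apply ha.2 hab.le]
  · rintro _ ⟨_, ⟨⟨c, rfl⟩, hc : ϕ c y ∈ B.carrier⟩, rfl⟩
    have hmod : ϕ (toIcoMod hT 0 c) y = ϕ c y := sub_mem_periods_iff.mp <| by
      rw [toIcoMod_sub_self]
      exact zsmul_mem hTy _
    exact ⟨toIcoMod hT 0 c, ⟨by simpa using toIcoMod_mem_Ico hT 0 c, by rwa [mem_ofPred_eq, hmod]⟩,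
      congrArg B.transversal hmod⟩

/-- The transversal is continuous along `γ` with finitely many values, hence constant. -/
theorem apply_time_sub_eq_of_mapsTo [T1Space M] {γ : ℝ → M} {S : Set ℝ} (hS : IsPreconnected S)
    (hγ : ContinuousOn γ S) (hγB : MapsTo γ S B.carrier) {y : M} (hγy : MapsTo γ S (ϕ.orbit y))
    {T : ℝ} (hT : 0 < T) (hTy : T ∈ ϕ.periods y) {s₀ s : ℝ} (hs₀ : s₀ ∈ S) (hs : s ∈ S) :
    ϕ (B.time (γ s) - B.time (γ s₀)) (γ s₀) = γ s :=
  B.apply_time_sub_of_transversal_eq <| hS.constant_of_mapsTo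
    (B.finite_transversal_image_orbit hT hTy).isDiscrete
    (B.continuousOn_transversal.comp hγ hγB)
    (fun s hs => ⟨γ s, ⟨hγy hs, hγB hs⟩, rfl⟩) hs₀ hs

end FlowBox

variable {ϕ : Flow ℝ M}

theorem exists_flowBox_of_openPartialHomeomorph {W E : Type*} [TopologicalSpace W]
    [TopologicalSpace E] (G : OpenPartialHomeomorph (ℝ × W) E) (e : OpenPartialHomeomorph M E)
    (q : W → M) {w₀ : W} (hGe : ∀ σ w, G (σ, w) = e (ϕ σ (q w)))
    (hsource : ∀ᶠ x in 𝓝 ((0 : ℝ), w₀), x ∈ G.source ∧ ϕ x.1 (q x.2) ∈ e.source) :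
    ∃ B : FlowBox ϕ, q w₀ ∈ B.carrier := by
  obtain ⟨u, N, hu, hu0, hN, hw₀, hsub⟩ := mem_nhds_prod_iff'.mp hsource
  obtain ⟨r, hr, hball⟩ := Metric.isOpen_iff.mp hu 0 hu0
  have hdom : ∀ σ w, |σ| < r → w ∈ N → (σ, w) ∈ G.source ∧ ϕ σ (q w) ∈ e.source :=
    fun σ w hσ hw => hsub ⟨hball (by rwa [Metric.mem_ball, Real.dist_0_eq_abs]), hw⟩
  have hinv : ∀ σ w, |σ| < r → w ∈ N → G.symm (e (ϕ σ (q w))) = (σ, w) := fun σ w hσ hw => by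
    rw [← hGe, G.left_inv (hdom σ w hσ hw).1]
  set S := Metric.ball (0 : ℝ) (r / 2) ×ˢ N
  have hSr : ∀ x ∈ S, |x.1| < r := fun x hx => by
    have := Metric.mem_ball.mp hx.1
    rw [Real.dist_0_eq_abs] at this
    linarith
  have hGS : G '' S ⊆ G.target := image_subset_iff.mpr fun x hx => G.map_source
    (hdom x.1 x.2 (hSr x hx) hx.2).1
  set U := e.source ∩ e ⁻¹' (G '' S)
  have hU : ∀ a ∈ U, ∃ σ w, |σ| < r / 2 ∧ w ∈ N ∧ a = ϕ σ (q w) ∧ G.symm (e a) = (σ, w) := by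
    rintro a ⟨ha, ⟨σ, w⟩, hσw, hGa⟩
    have hσ := hSr _ hσw
    have hσ' : |σ| < r / 2 := by simpa [Real.dist_0_eq_abs] using hσw.1
    have hrep : a = ϕ σ (q w) :=
      e.injOn ha (hdom σ w hσ hσw.2).2 (by rw [← hGa, hGe])
    exact ⟨σ, w, hσ', hσw.2, hrep, by rw [hrep, hinv σ w hσ hσw.2]⟩
  refine ⟨⟨U, r / 2, fun a => (G.symm (e a)).1,
    e.continuousOn.isOpen_inter_preimage e.open_source
      (G.isOpen_image_of_subset_source (Metric.isOpen_ball.prod hN) fun x hx =>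
        (hdom x.1 x.2 (hSr x hx) hx.2).1),
    half_pos hr,
    continuous_fst.comp_continuousOn <| G.continuousOn_symm.comp
      (e.continuousOn.mono inter_subset_left) fun a ha => hGS ha.2, ?_⟩, ?_⟩
  · intro a ha h hh
    obtain ⟨σ, w, hσ, hw, rfl, hGa⟩ := hU a ha
    rw [hGa, ← map_add, hinv (h + σ) w (by linarith [abs_add_le h σ]) hw, add_comm]
  · have hw := hdom 0 w₀ (by rwa [abs_zero]) hw₀
    rw [map_zero_apply] at hw
    refine ⟨hw.2, (0, w₀), ⟨Metric.mem_ball_self (half_pos hr), hw₀⟩, ?_⟩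
    rw [hGe, map_zero_apply]

theorem exists_periods_eq_zmultiples {x : M} {ε : ℝ} (hε : 0 < ε)
    (hiso : ∀ t ∈ ϕ.periods x, |t| < ε → t = 0) :
    ∃ T, 0 ≤ T ∧ ϕ.periods x = AddSubgroup.zmultiples T := by
  obtain ⟨b, hb⟩ := AddSubgroup.cyclic_of_isolated_zero hε <| disjoint_left.mpr fun t ht htε =>
    htε.1.ne' (hiso t ht (by rw [abs_of_pos htε.1]; exact htε.2))
  refine ⟨|b|, abs_nonneg b, hb.trans ?_⟩
  rw [← AddSubgroup.zmultiples_eq_closure]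
  rcases abs_choice b with h | h <;> rw [h]
  exact AddSubgroup.zmultiples_neg.symm

theorem isDiscrete_periods_of_isolated {x : M} {ε : ℝ} (hε : 0 < ε)
    (hiso : ∀ t ∈ ϕ.periods x, |t| < ε → t = 0) : IsDiscrete (ϕ.periods x : Set ℝ) := by
  obtain ⟨T, -, hT⟩ := exists_periods_eq_zmultiples hε hiso
  rw [hT, isDiscrete_iff_discreteTopology]
  exact inferInstanceAs (DiscreteTopology (AddSubgroup.zmultiples T))

theorem exists_pos_forall_periods_isolated [CompactSpace M]
    (hbox : ∀ p, ∃ B : FlowBox ϕ, p ∈ B.carrier) :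
    ∃ ε > 0, ∀ x, ∀ t ∈ ϕ.periods x, |t| < ε → t = 0 := by
  choose B hB using hbox
  obtain ⟨c, hc⟩ := isCompact_univ.elim_finite_subcover (fun p => (B p).carrier)
    (fun p => (B p).isOpen_carrier) (fun x _ => mem_iUnion.mpr ⟨x, hB x⟩)
  have hsmall : ∀ᶠ ε in 𝓝[>] (0 : ℝ), ∀ p ∈ c, ε ≤ (B p).radius :=
    (eventually_all_finset c).mpr fun p _ =>
      nhdsWithin_le_nhds (eventually_le_nhds (B p).radius_pos)
  obtain ⟨ε, hεr, hε⟩ := (hsmall.and self_mem_nhdsWithin).exists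
  refine ⟨ε, hε, fun x t ht htε => ?_⟩
  obtain ⟨p, hp, hxp⟩ := mem_iUnion₂.mp (hc (mem_univ x))
  exact (B p).eq_zero_of_mem_periods hxp (htε.le.trans (hεr p hp)) ht

variable (ϕ) in
def IsLiftOn (y : M) (γ : ℝ → M) (S : Set ℝ) (Θ : ℝ → ℝ) : Prop :=
  ContinuousOn Θ S ∧ ∀ s ∈ S, ϕ (Θ s) y = γ s

namespace IsLiftOn

variable {y : M} {γ : ℝ → M} {Θ : ℝ → ℝ}

theorem sub_eq_sub {S : Set ℝ} {Θ' : ℝ → ℝ} (h : IsLiftOn ϕ y γ S Θ) (h' : IsLiftOn ϕ y γ S Θ')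
    (hS : IsPreconnected S) (hy : IsDiscrete (ϕ.periods y : Set ℝ)) {s₀ s : ℝ} (hs₀ : s₀ ∈ S)
    (hs : s ∈ S) : Θ s - Θ s₀ = Θ' s - Θ' s₀ := by
  have := hS.constant_of_mapsTo hy (h.1.sub h'.1)
    (fun s hs => sub_mem_periods_iff.mpr ((h.2 s hs).trans (h'.2 s hs).symm)) hs hs₀
  simp only [Pi.sub_apply] at this
  linarith

theorem orbit_subset_image {a b T : ℝ} (h : IsLiftOn ϕ y γ (Icc a b) Θ) (hab : a ≤ b)
    (hT : ϕ.periods y = AddSubgroup.zmultiples T) (hT₀ : 0 ≤ T)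
    (hper : Θ b - Θ a ∈ ϕ.periods y) (hne : Θ b ≠ Θ a) :
    ϕ.orbit y ⊆ γ '' Icc a b := by
  rintro _ ⟨c, rfl⟩
  obtain ⟨k, hk⟩ := AddSubgroup.mem_zmultiples_iff.mp (hT ▸ hper)
  have hk0 : k ≠ 0 := by
    rintro rfl
    rw [zero_smul] at hk
    exact hne (by linarith)
  have hTpos : 0 < T := hT₀.lt_of_ne <| by
    rintro rfl
    rw [smul_zero] at hk
    exact hne (by linarith)
  have hTle : T ≤ |Θ b - Θ a| := by
    rw [← hk, abs_zsmul, abs_of_pos hTpos, zsmul_eq_mul]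
    exact le_mul_of_one_le_left hTpos.le (by exact_mod_cast Int.one_le_abs hk0)
  have hmem : toIcoMod hTpos (min (Θ a) (Θ b)) c ∈ uIcc (Θ a) (Θ b) := by
    have hc := toIcoMod_mem_Ico hTpos (min (Θ a) (Θ b)) c
    rcases le_total (Θ a) (Θ b) with hle | hle
    · rw [min_eq_left hle] at hc ⊢
      rw [abs_of_nonneg (sub_nonneg.2 hle)] at hTle
      exact Icc_subset_uIcc ⟨hc.1, by linarith [hc.2]⟩
    · rw [min_eq_right hle] at hc ⊢
      rw [abs_of_nonpos (sub_nonpos.2 hle)] at hTle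
      exact Icc_subset_uIcc' ⟨hc.1, by linarith [hc.2]⟩
  obtain ⟨s, hs, hΘs⟩ := intermediate_value_uIcc (uIcc_of_le hab ▸ h.1) hmem
  rw [uIcc_of_le hab] at hs
  refine ⟨s, hs, ?_⟩
  rw [← h.2 s hs, hΘs]
  refine sub_mem_periods_iff.mp ?_
  rw [hT, toIcoMod_sub_self]
  exact zsmul_mem (AddSubgroup.mem_zmultiples T) _

theorem extend [T1Space M] {a b c : ℝ} (h : IsLiftOn ϕ y γ (Icc a b) Θ) (hab : a ≤ b)
    (hbc : b ≤ c) (B : FlowBox ϕ) (hγ : ContinuousOn γ (Icc b c))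
    (hγB : MapsTo γ (Icc b c) B.carrier) (hγy : MapsTo γ (Icc b c) (ϕ.orbit y)) {T : ℝ}
    (hT : 0 < T) (hTy : T ∈ ϕ.periods y) :
    IsLiftOn ϕ y γ (Icc a c) (fun s => Θ (min s b) + (B.time (γ (max s b)) - B.time (γ b))) := by
  have hmin : MapsTo (fun s => min s b) (Icc a c) (Icc a b) :=
    fun s hs => ⟨le_min hs.1 hab, min_le_right _ _⟩
  have hmax : MapsTo (fun s => max s b) (Icc a c) (Icc b c) :=
    fun s hs => ⟨le_max_right _ _, max_le hs.2 hbc⟩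
  refine ⟨(h.1.comp (continuous_id.min continuous_const).continuousOn hmin).add
    (((B.continuousOn_time.comp hγ hγB).comp (continuous_id.max continuous_const).continuousOn
      hmax).sub continuousOn_const), fun s hs => ?_⟩
  dsimp only
  rcases le_total s b with hsb | hbs
  · simp [min_eq_left hsb, max_eq_right hsb, h.2 s ⟨hs.1, hsb⟩]
  · rw [min_eq_right hbs, max_eq_left hbs, add_comm, map_add, h.2 b ⟨hab, le_rfl⟩]
    exact B.apply_time_sub_eq_of_mapsTo isPreconnected_Icc hγ hγB hγy hT hTy ⟨le_rfl, hbc⟩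
      ⟨hbs, hs.2⟩

end IsLiftOn

theorem exists_isLiftOn_of_forall_mapsTo [T1Space M] {γ : ℝ → M} {y : M} (hγ : Continuous γ)
    (hγy : ∀ s, γ s ∈ ϕ.orbit y) {T : ℝ} (hT : 0 < T) (hTy : T ∈ ϕ.periods y) {a : ℕ → ℝ}
    (ha : Monotone a) (hγ0 : γ (a 0) = y) {B : ℕ → FlowBox ϕ} (m : ℕ)
    (hB : ∀ k < m, MapsTo γ (Icc (a k) (a (k + 1))) (B k).carrier) :
    ∃ Θ, IsLiftOn ϕ y γ (Icc (a 0) (a m)) Θ ∧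
      Θ (a m) - Θ (a 0) =
        ∑ k ∈ Finset.range m, ((B k).time (γ (a (k + 1))) - (B k).time (γ (a k))) := by
  induction m with
  | zero =>
    refine ⟨0, ⟨continuousOn_const, fun s hs => ?_⟩, by simp⟩
    rw [Icc_self, mem_singleton_iff] at hs
    rw [hs, hγ0, Pi.zero_apply, map_zero_apply]
  | succ m ih =>
    obtain ⟨Θ, hΘ, hsum⟩ := ih fun k hk => hB k (by omega)
    refine ⟨_, hΘ.extend (ha m.zero_le) (ha m.le_succ) (B m) hγ.continuousOn
      (hB m m.lt_succ_self) (fun s _ => hγy s) hT hTy, ?_⟩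
    simp only [Finset.sum_range_succ, min_eq_left (ha m.zero_le), min_eq_right (ha m.le_succ),
      max_eq_right (ha m.zero_le), max_eq_left (ha m.le_succ)]
    linarith

variable (ϕ) in
/-- When the periods of `γ 0` are discrete, `Θ T - Θ 0` is the same for all lifts
(`IsLiftOn.sub_eq_sub`). -/
def HasNonzeroWinding (γ : ℝ → M) (T : ℝ) : Prop :=
  ∃ Θ, IsLiftOn ϕ (γ 0) γ (Icc 0 T) Θ ∧ Θ T ≠ Θ 0

section Homotopy

variable [T1Space M] (hbox : ∀ p, ∃ B : FlowBox ϕ, p ∈ B.carrier)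
  (hper : ∀ x, ∃ T > 0, T ∈ ϕ.periods x) {Γ : ℝ × ℝ → M} (hΓ : Continuous Γ) {T₀ : ℝ}
  (hT₀ : 0 < T₀) (horb : ∀ s t, Γ (s, t) ∈ ϕ.orbit (Γ (0, t)))
  (hloop : ∀ t, Γ (T₀, t) = Γ (0, t))

include hbox hper hΓ hT₀ horb in
theorem exists_continuousAt_eventually_isLiftOn (t₀ : ℝ) :
    ∃ W : ℝ → ℝ, ContinuousAt W t₀ ∧ ∀ᶠ t in 𝓝 t₀,
      ∃ Θ, IsLiftOn ϕ (Γ (0, t)) (fun s => Γ (s, t)) (Icc 0 T₀) Θ ∧ Θ T₀ - Θ 0 = W t := by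
  obtain ⟨m, hm, B, hB⟩ := exists_partition_mapsTo hΓ (fun B : FlowBox ϕ => B.isOpen_carrier)
    hbox hT₀.le t₀
  set a : ℕ → ℝ := fun k => k * T₀ / m
  have ha : Monotone a := fun i j hij => by dsimp only [a]; gcongr
  have ha0 : a 0 = 0 := by simp [a]
  have ham : a m = T₀ := by
    have : (m : ℝ) ≠ 0 := by positivity
    simp only [a]
    field_simp
  have htime (k j : ℕ) (hj : Γ (a j, t₀) ∈ (B k).carrier) :
      ContinuousAt (fun t => (B k).time (Γ (a j, t))) t₀ :=
    ((B k).continuousOn_time.continuousAt ((B k).isOpen_carrier.mem_nhds hj)).comp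
      (f := fun t => Γ (a j, t)) (hΓ.comp (by fun_prop)).continuousAt
  refine ⟨fun t => ∑ k ∈ Finset.range m, ((B k).time (Γ (a (k + 1), t)) - (B k).time (Γ (a k, t))),
    tendsto_finsetSum _ fun k hk => (htime k (k + 1) ?_).sub (htime k k ?_), ?_⟩
  · exact hB.self_of_nhds k (Finset.mem_range.mp hk) ⟨ha k.le_succ, le_rfl⟩
  · exact hB.self_of_nhds k (Finset.mem_range.mp hk) ⟨le_rfl, ha k.le_succ⟩
  filter_upwards [hB] with t ht
  obtain ⟨T, hT, hTy⟩ := hper (Γ (0, t))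
  have := exists_isLiftOn_of_forall_mapsTo (γ := fun s => Γ (s, t)) (hΓ.comp (by fun_prop))
    (fun s => horb s t) hT hTy ha (by rw [ha0]) m (B := B) ht
  rwa [ha0, ham] at this

include hbox hper hΓ hT₀ horb hloop in
theorem eventually_hasNonzeroWinding_iff {ε : ℝ} (hε : 0 < ε)
    (hiso : ∀ x, ∀ t ∈ ϕ.periods x, |t| < ε → t = 0) (t₀ : ℝ) :
    ∀ᶠ t in 𝓝 t₀, (ϕ.HasNonzeroWinding (fun s => Γ (s, t)) T₀ ↔
      ϕ.HasNonzeroWinding (fun s => Γ (s, t₀)) T₀) := by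
  obtain ⟨W, hWcont, hlift⟩ := exists_continuousAt_eventually_isLiftOn hbox hper hΓ hT₀ horb t₀
  have hwind : ∀ᶠ t in 𝓝 t₀, (ϕ.HasNonzeroWinding (fun s => Γ (s, t)) T₀ ↔ W t ≠ 0) := by
    filter_upwards [hlift] with t ⟨Θ, hΘ, hW⟩
    refine ⟨fun ⟨Θ', hΘ', hne⟩ => ?_, fun hne => ⟨Θ, hΘ, fun h => hne (by rw [← hW, h, sub_self])⟩⟩
    rw [← hW, hΘ.sub_eq_sub hΘ' isPreconnected_Icc (isDiscrete_periods_of_isolated hε (hiso _))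
      (left_mem_Icc.2 hT₀.le) (right_mem_Icc.2 hT₀.le)]
    exact sub_ne_zero.mpr hne
  have hWper : ∀ᶠ t in 𝓝 t₀, W t ∈ ϕ.periods (Γ (0, t)) := by
    filter_upwards [hlift] with t ⟨Θ, hΘ, hW⟩
    rw [← hW, sub_mem_periods_iff, hΘ.2 _ (right_mem_Icc.2 hT₀.le), hΘ.2 _ (left_mem_Icc.2 hT₀.le)]
    exact hloop t
  filter_upwards [hwind, eventually_eq_zero_iff_of_isolated hWcont hε
    (hWper.mono fun t ht => hiso _ _ ht)] with t h1 h2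
  rw [h1, hwind.self_of_nhds, not_iff_not, h2]

include hbox hper hΓ hT₀ horb hloop in
theorem orbit_subset_image_of_homotopy [CompactSpace M] (hinit : ∀ s, Γ (s, 0) = ϕ s (Γ (0, 0)))
    (t : ℝ) : ϕ.orbit (Γ (0, t)) ⊆ (fun s => Γ (s, t)) '' Icc 0 T₀ := by
  obtain ⟨ε, hε, hiso⟩ := exists_pos_forall_periods_isolated hbox
  have hconst : IsLocallyConstant fun t => ϕ.HasNonzeroWinding (fun s => Γ (s, t)) T₀ :=
    (IsLocallyConstant.iff_eventually_eq _).mpr fun t₀ =>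
      (eventually_hasNonzeroWinding_iff hbox hper hΓ hT₀ horb hloop hε hiso t₀).mono
        fun t h => propext h
  have hwind0 : ϕ.HasNonzeroWinding (fun s => Γ (s, 0)) T₀ :=
    ⟨id, ⟨continuousOn_id, fun s _ => (hinit s).symm⟩, hT₀.ne'⟩
  obtain ⟨Θ, hΘ, hne⟩ := hconst.apply_eq_of_preconnectedSpace 0 t ▸ hwind0
  obtain ⟨T, hT, hTy⟩ := exists_periods_eq_zmultiples hε (hiso (Γ (0, t)))
  refine hΘ.orbit_subset_image hT₀.le hTy hT ?_ hne
  rw [sub_mem_periods_iff, hΘ.2 _ (right_mem_Icc.2 hT₀.le), hΘ.2 _ (left_mem_Icc.2 hT₀.le)]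
  exact hloop t

end Homotopy

theorem image_eq_orbit_of_homotopy [CompactSpace M] [T1Space M]
    (hbox : ∀ p, ∃ B : FlowBox ϕ, p ∈ B.carrier) (hper : ∀ x, ∃ T > 0, T ∈ ϕ.periods x)
    {x₀ : M} {H : M → ℝ → M} (hH : ContinuousOn (uncurry H) (ϕ.orbit x₀ ×ˢ Icc 0 1))
    (hH0 : ∀ x ∈ ϕ.orbit x₀, H x 0 = x)
    (hHorbit : ∀ t ∈ Icc (0 : ℝ) 1, ∀ x ∈ ϕ.orbit x₀, H x t ∈ ϕ.orbit (H x₀ t))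
    {t : ℝ} (ht : t ∈ Icc (0 : ℝ) 1) : (fun x => H x t) '' ϕ.orbit x₀ = ϕ.orbit (H x₀ t) := by
  obtain ⟨T₀, hT₀, hT₀x₀⟩ := hper x₀
  have hx₀ : ∀ s, ϕ s x₀ ∈ ϕ.orbit x₀ := ϕ.mem_orbit x₀
  set Γ : ℝ × ℝ → M := fun q => H (ϕ q.1 x₀) (projIcc 0 1 zero_le_one q.2)
  have hΓ : Continuous Γ :=
    hH.comp_continuous ((ϕ.continuous continuous_fst continuous_const).prodMk
      (continuous_subtype_val.comp ((continuous_projIcc (h := zero_le_one)).comp continuous_snd)))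
      fun q => ⟨hx₀ q.1, (projIcc 0 1 zero_le_one q.2).2⟩
  have hΓ0 (t : ℝ) : Γ (0, t) = H x₀ (projIcc 0 1 zero_le_one t) := by simp [Γ, map_zero_apply]
  have hcover := orbit_subset_image_of_homotopy hbox hper hΓ hT₀
    (fun s t => hΓ0 t ▸ hHorbit _ (projIcc 0 1 zero_le_one t).2 _ (hx₀ s))
    (fun t => by simp only [Γ, mem_periods.mp hT₀x₀, map_zero_apply])
    (fun s => by simp [Γ, hH0 _ (hx₀ _), hH0 x₀ (ϕ.mem_orbit_self x₀), map_zero_apply]) t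
  rw [hΓ0, projIcc_of_mem _ ht] at hcover
  refine subset_antisymm (image_subset_iff.mpr fun x hx => hHorbit t ht x hx) fun z hz => ?_
  obtain ⟨s, -, hs⟩ := hcover hz
  exact ⟨ϕ s x₀, hx₀ s, by simpa [Γ, projIcc_of_mem _ ht] using hs⟩

section Chart

variable {E : Type*} [NormedAddCommGroup E] [NormedSpace ℝ E] [ChartedSpace E M] {p : M}

variable (E ϕ p) in
def inChart (q : ℝ × E) : E :=
  chartAt E p (ϕ q.1 ((chartAt E p).symm q.2))

variable (E ϕ p) in
noncomputable def generatorInChart : E :=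
  fderiv ℝ (ϕ.inChart E p) (0, chartAt E p p) (1, 0)

theorem contDiffAt_inChart (hϕ : ContMDiff (𝓘(ℝ, ℝ).prod 𝓘(ℝ, E)) 𝓘(ℝ, E) 1 (uncurry ϕ)) :
    ContDiffAt ℝ 1 (ϕ.inChart E p) (0, chartAt E p p) := by
  have h := (contMDiffAt_iff.mp (hϕ ((0 : ℝ), p))).2
  simp only [extChartAt_prod, extChartAt_model_space_eq_id, uncurry_apply_pair,
    ϕ.map_zero_apply] at h
  rw [ModelWithCorners.range_eq_univ, contDiffWithinAt_univ] at h
  exact h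

omit [NormedSpace ℝ E] in
theorem inChart_zero {x : E} (hx : x ∈ (chartAt E p).target) : ϕ.inChart E p (0, x) = x := by
  rw [inChart, map_zero_apply, (chartAt E p).right_inv hx]

theorem fderiv_inChart_apply (hF : DifferentiableAt ℝ (ϕ.inChart E p) (0, chartAt E p p))
    (σ : ℝ) (ξ : E) :
    fderiv ℝ (ϕ.inChart E p) (0, chartAt E p p) (σ, ξ) = σ • ϕ.generatorInChart E p + ξ := by
  have hslice : HasFDerivAt (fun x => ϕ.inChart E p (0, x)) (ContinuousLinearMap.id ℝ E)
      (chartAt E p p) :=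
    (hasFDerivAt_id _).congr_of_eventuallyEq <| eventually_of_mem
      ((chartAt E p).open_target.mem_nhds (mem_chart_target E p)) fun x hx => inChart_zero hx
  have h0ξ := congrArg (· ξ)
    ((hF.hasFDerivAt.comp _ (hasFDerivAt_prodMk_right (0 : ℝ) (chartAt E p p))).unique hslice)
  simp only [ContinuousLinearMap.coe_comp, comp_apply, ContinuousLinearMap.inr_apply,
    ContinuousLinearMap.coe_id', id_eq] at h0ξ
  have hsplit : (σ, ξ) = σ • ((1 : ℝ), (0 : E)) + ((0 : ℝ), ξ) := by simp
  rw [hsplit, _root_.map_add, _root_.map_smul, h0ξ, generatorInChart]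

omit [NormedSpace ℝ E] in
theorem inChart_add {σ h : ℝ} (hh : ϕ h p ∈ (chartAt E p).source) :
    ϕ.inChart E p (σ + h, chartAt E p p) = ϕ.inChart E p (σ, ϕ.inChart E p (h, chartAt E p p)) := by
  simp only [inChart, (chartAt E p).left_inv (mem_chart_source E p), (chartAt E p).left_inv hh,
    map_add]

variable (E ϕ p) in
omit [NormedSpace ℝ E] in
theorem eventually_apply_mem_chart_source : ∀ᶠ h in 𝓝 (0 : ℝ), ϕ h p ∈ (chartAt E p).source := by
  refine (ϕ.continuous continuous_id continuous_const).continuousAt.preimage_mem_nhds ?_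
  rw [id, map_zero_apply]
  exact (chartAt E p).open_source.mem_nhds (mem_chart_source E p)

/-- The orbit of `p`, read in the chart, solves the linearised equation along itself: this is the
flow law `ϕ (σ + h) p = ϕ σ (ϕ h p)` differentiated in `h` at `0`. -/
theorem eventually_hasDerivAt_inChart
    (hϕ : ContMDiff (𝓘(ℝ, ℝ).prod 𝓘(ℝ, E)) 𝓘(ℝ, E) 1 (uncurry ϕ)) :
    ∀ᶠ σ in 𝓝 (0 : ℝ), HasDerivAt (fun σ => ϕ.inChart E p (σ, chartAt E p p))
      (fderiv ℝ (ϕ.inChart E p) (σ, chartAt E p p) (0, ϕ.generatorInChart E p)) σ := by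
  set c : ℝ → E := fun σ => ϕ.inChart E p (σ, chartAt E p p)
  have hF := contDiffAt_inChart hϕ (p := p)
  have hc0 : HasDerivAt c (ϕ.generatorInChart E p) 0 := by
    have := (hF.differentiableAt one_ne_zero).hasFDerivAt.comp_hasDerivAt (0 : ℝ)
      ((hasDerivAt_id (0 : ℝ)).prodMk (hasDerivAt_const (0 : ℝ) (chartAt E p p)))
    exact this
  have hdiff : ∀ᶠ σ in 𝓝 (0 : ℝ), DifferentiableAt ℝ (ϕ.inChart E p) (σ, chartAt E p p) :=
    ((continuous_id.prodMk continuous_const).tendsto (0 : ℝ)).eventually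
      ((hF.eventually (by simp)).mono fun q hq => hq.differentiableAt one_ne_zero)
  filter_upwards [hdiff] with σ hσ
  have hshift : (fun s => ϕ.inChart E p (σ, c (s - σ))) =ᶠ[𝓝 σ] c := by
    have : Tendsto (fun s => s - σ) (𝓝 σ) (𝓝 0) := by
      simpa using (continuous_sub_right σ).tendsto' σ 0 (sub_self σ)
    filter_upwards [this.eventually (ϕ.eventually_apply_mem_chart_source E p)] with s hs
    rw [← inChart_add hs, add_sub_cancel]
  refine HasDerivAt.congr_of_eventuallyEq ?_ hshift.symm
  exact hσ.hasFDerivAt.comp_hasDerivAt_of_eq σ ((hasDerivAt_const σ σ).prodMk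
      (HasDerivAt.comp_sub_const σ σ (by rwa [sub_self] : HasDerivAt c _ (σ - σ))))
    (by rw [sub_self, ← inChart_zero (mem_chart_target E p)])

theorem generatorInChart_ne_zero (hϕ : ContMDiff (𝓘(ℝ, ℝ).prod 𝓘(ℝ, E)) 𝓘(ℝ, E) 1 (uncurry ϕ))
    (hp : ∃ t, ϕ t p ≠ p) : ϕ.generatorInChart E p ≠ 0 := by
  intro hX
  obtain ⟨t, ht⟩ := hp
  suffices hfix : (ϕ.periods p : Set ℝ) ∈ 𝓝 0 from
    ht (mem_periods.mp ((periods_eq_top_of_mem_nhds hfix).symm ▸ AddSubgroup.mem_top t))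
  obtain ⟨ρ, hρ, hball⟩ := Metric.eventually_nhds_iff_ball.mp
    ((eventually_hasDerivAt_inChart hϕ (p := p)).and (ϕ.eventually_apply_mem_chart_source E p))
  simp only [hX, Prod.mk_zero_zero, ContinuousLinearMap.map_zero] at hball
  refine Metric.mem_nhds_iff.mpr ⟨ρ, hρ, fun σ hσ => ?_⟩
  have hconst := Metric.isOpen_ball.is_const_of_deriv_eq_zero (convex_ball 0 ρ).isPreconnected
    (fun x hx => (hball x hx).1.differentiableAt.differentiableWithinAt)
    (fun x hx => (hball x hx).1.deriv) hσ (Metric.mem_ball_self hρ)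
  simp only [inChart, (chartAt E p).left_inv (mem_chart_source E p), map_zero_apply] at hconst
  exact (chartAt E p).injOn (hball σ hσ).2 (mem_chart_source E p) hconst

theorem exists_hasStrictFDerivAt_inChart [FiniteDimensional ℝ E]
    (hϕ : ContMDiff (𝓘(ℝ, ℝ).prod 𝓘(ℝ, E)) 𝓘(ℝ, E) 1 (uncurry ϕ)) (hp : ∃ t, ϕ t p ≠ p) :
    ∃ (W : Submodule ℝ E) (L : (ℝ × W) ≃L[ℝ] E), HasStrictFDerivAt
      (fun q : ℝ × W => ϕ.inChart E p (q.1, chartAt E p p + q.2)) (L : ℝ × W →L[ℝ] E) 0 := by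
  have hF := contDiffAt_inChart hϕ (p := p)
  have hX := generatorInChart_ne_zero hϕ hp
  obtain ⟨W, hW⟩ := (ℝ ∙ ϕ.generatorInChart E p).exists_isCompl
  let L : (ℝ × W) ≃L[ℝ] E := (((LinearEquiv.toSpanNonzeroSingleton ℝ E _ hX).prodCongr
    (LinearEquiv.refl ℝ W)).trans (Submodule.prodEquivOfIsCompl _ _ hW)).toContinuousLinearEquiv
  have hL : ∀ σ (w : W), L (σ, w) = σ • ϕ.generatorInChart E p + w := fun σ w => by
    simp [L]
  set x₀ := chartAt E p p
  have hj : HasStrictFDerivAt (fun q : ℝ × W => ((q.1, x₀ + q.2) : ℝ × E))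
      ((ContinuousLinearMap.fst ℝ ℝ W).prod (W.subtypeL.comp (ContinuousLinearMap.snd ℝ ℝ W)))
      0 :=
    hasStrictFDerivAt_fst.prodMk
      ((W.subtypeL.comp (ContinuousLinearMap.snd ℝ ℝ W)).hasStrictFDerivAt.const_add x₀)
  have hF' : HasStrictFDerivAt (ϕ.inChart E p) (fderiv ℝ (ϕ.inChart E p) (0, x₀))
      ((0 : ℝ × W).1, x₀ + ((0 : ℝ × W).2 : E)) := by
    simpa using hF.hasStrictFDerivAt one_ne_zero
  refine ⟨W, L, (hF'.comp (0 : ℝ × W) hj).congr_fderiv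
    (ContinuousLinearMap.ext fun ⟨σ, w⟩ => ?_)⟩
  simp only [ContinuousLinearMap.coe_comp, comp_apply, ContinuousLinearMap.prod_apply,
    ContinuousLinearMap.coe_fst', ContinuousLinearMap.coe_snd', Submodule.subtypeL_apply,
    ContinuousLinearEquiv.coe_coe, hL]
  exact fderiv_inChart_apply (hF.differentiableAt one_ne_zero) σ w

/-- By the inverse function theorem, `(σ, w) ↦ ϕ σ (chart⁻¹ (chart p + w))`, for `w` in a
complement of the generator, is a local homeomorphism at `0`. -/
theorem exists_flowBox [FiniteDimensional ℝ E]
    (hϕ : ContMDiff (𝓘(ℝ, ℝ).prod 𝓘(ℝ, E)) 𝓘(ℝ, E) 1 (uncurry ϕ)) (hp : ∃ t, ϕ t p ≠ p) :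
    ∃ B : FlowBox ϕ, p ∈ B.carrier := by
  obtain ⟨W, L, hg⟩ := exists_hasStrictFDerivAt_inChart hϕ hp
  set G := hg.toOpenPartialHomeomorph _
  set q : W → M := fun w => (chartAt E p).symm (chartAt E p p + w)
  have hq : ContinuousAt (fun x : ℝ × W => ϕ x.1 (q x.2)) 0 :=
    ϕ.cont'.continuousAt.comp <| continuousAt_fst.prodMk <|
      ((chartAt E p).continuousAt_symm (by simp)).comp
        (continuousAt_const.add (continuous_subtype_val.comp continuous_snd).continuousAt)
  have hq0 : q 0 = p := by simp [q, (chartAt E p).left_inv (mem_chart_source E p)]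
  have hG : ∀ᶠ x in 𝓝 (0 : ℝ × W), x ∈ G.source :=
    G.open_source.mem_nhds hg.mem_toOpenPartialHomeomorph_source
  have hchart : ∀ᶠ x in 𝓝 (0 : ℝ × W), ϕ x.1 (q x.2) ∈ (chartAt E p).source :=
    hq.preimage_mem_nhds <| (chartAt E p).open_source.mem_nhds <| by simp [hq0]
  simpa [hq0] using exists_flowBox_of_openPartialHomeomorph G (chartAt E p) q (fun _ _ => rfl)
    (hG.and hchart)

end Chart

end Flow

theorem stmt9_general {n : ℕ} {M : Type*} [TopologicalSpace M]
    [ChartedSpace (EuclideanSpace ℝ (Fin n)) M]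
    [CompactSpace M]
    (φ : ℝ × M → M)
    (hφ : ContMDiff ((𝓘(ℝ, ℝ)).prod (𝓡 n)) (𝓡 n) (⊤ : ℕ∞) φ)
    (hzero : ∀ x : M, φ (0, x) = x)
    (hadd : ∀ s t : ℝ, ∀ x : M, φ (s + t, x) = φ (s, φ (t, x)))
    (hper : ∀ x : M, ∃ T > (0:ℝ), φ (T, x) = x)
    (hnonfix : ∀ x : M, ∃ t : ℝ, φ (t, x) ≠ x)
    (x₀ : M) (L : Set M) (hL : L = {y : M | ∃ t : ℝ, φ (t, x₀) = y})
    (H : M → ℝ → M)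
    (hHcont : ContinuousOn (fun p : M × ℝ => H p.1 p.2) (L ×ˢ Set.Icc (0:ℝ) 1))
    (hH0 : ∀ x ∈ L, H x 0 = x)
    (O : ℝ → Set M)
    (hO : ∀ t ∈ Set.Icc (0:ℝ) 1, ∃ y : M, O t = {z : M | ∃ s : ℝ, φ (s, y) = z})
    (hHO : ∀ t ∈ Set.Icc (0:ℝ) 1, ∀ x ∈ L, H x t ∈ O t) :
    ∀ t ∈ Set.Icc (0:ℝ) 1, (fun x => H x t) '' L = O t := by
  let ϕ : Flow ℝ M := ⟨fun t x => φ (t, x), hφ.continuous, hadd, hzero⟩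
  have : T1Space M := ChartedSpace.t1Space (EuclideanSpace ℝ (Fin n)) M
  have hbox (p : M) : ∃ B : Flow.FlowBox ϕ, p ∈ B.carrier :=
    Flow.exists_flowBox (hφ.of_le (by norm_cast)) (hnonfix p)
  subst hL
  have horbit (t : ℝ) (ht : t ∈ Icc (0 : ℝ) 1) : O t = ϕ.orbit (H x₀ t) := by
    obtain ⟨y, hy⟩ := hO t ht
    have hx₀ := hHO t ht x₀ (ϕ.mem_orbit_self x₀)
    rw [hy] at hx₀ ⊢
    exact (Flow.orbit_eq_of_mem_orbit (ϕ := ϕ) hx₀).symm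
  intro t ht
  rw [horbit t ht]
  exact Flow.image_eq_orbit_of_homotopy hbox hper hHcont hH0
    (fun t ht x hx => horbit t ht ▸ hHO t ht x hx) ht

/-- For a smooth everywhere-periodic nonsingular flow on a closed smooth manifold, if
a continuous homotopy of the inclusion of an orbit `L` sends `L × {t}` into a single
orbit `O t` for each `t ∈ [0,1]`, then it sends `L × {t}` onto the whole orbit `O t`
(the flow instance of Theorem 4.2 of Hurder–Walczak, after Hurder 2006). -/
theorem stmt9 {n : ℕ} {M : Type*} [TopologicalSpace M]
    [ChartedSpace (EuclideanSpace ℝ (Fin n)) M]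
    [IsManifold (𝓡 n) ((⊤ : ℕ∞) : WithTop ℕ∞) M] [CompactSpace M]
    (φ : ℝ × M → M)
    (hφ : ContMDiff ((𝓘(ℝ, ℝ)).prod (𝓡 n)) (𝓡 n) (⊤ : ℕ∞) φ)
    (hzero : ∀ x : M, φ (0, x) = x)
    (hadd : ∀ s t : ℝ, ∀ x : M, φ (s + t, x) = φ (s, φ (t, x)))
    (hper : ∀ x : M, ∃ T > (0:ℝ), φ (T, x) = x)
    (hnonfix : ∀ x : M, ∃ t : ℝ, φ (t, x) ≠ x)
    (x₀ : M) (L : Set M) (hL : L = {y : M | ∃ t : ℝ, φ (t, x₀) = y})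
    (H : M → ℝ → M)
    (hHcont : ContinuousOn (fun p : M × ℝ => H p.1 p.2) (L ×ˢ Set.Icc (0:ℝ) 1))
    (hH0 : ∀ x ∈ L, H x 0 = x)
    (O : ℝ → Set M)
    (hO : ∀ t ∈ Set.Icc (0:ℝ) 1, ∃ y : M, O t = {z : M | ∃ s : ℝ, φ (s, y) = z})
    (hHO : ∀ t ∈ Set.Icc (0:ℝ) 1, ∀ x ∈ L, H x t ∈ O t) :
    ∀ t ∈ Set.Icc (0:ℝ) 1, (fun x => H x t) '' L = O t :=
  stmt9_general φ hφ hzero hadd hper hnonfix x₀ L hL H hHcont hH0 O hO hHO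
end
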